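/- Lightness transfer: let G be a weighted graph, H its greedy t-spanner, and suppose the induced metric M_H admits a t-spanner of lightness at most l (weight at most l times w(MST(M_H))). Then the greedy spanner H itself has lightness at most l with respect to G, i.e., w(H) ≤ l·w(MST(G)). -/

import Mathlib

open SimpleGraph
open scoped ENNReal

variable {V : Type*} [Fintype V] [DecidableEq V]

/-- The simple graph determined by a finite edge set. -/
def toSG (E : Finset (Sym2 V)) : SimpleGraph V := SimpleGraph.fromEdgeSet (↑E)

/-- Weight (in `ℝ≥0∞`) of a walk, given edge weights `w`. -/
noncomputable def walkWeight (w : Sym2 V → ℝ) {G : SimpleGraph V} {u v : V}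
    (p : G.Walk u v) : ℝ≥0∞ :=
  (p.edges.map fun e => ENNReal.ofReal (w e)).sum

/-- Shortest-path distance (in `ℝ≥0∞`) between the endpoints of the pair `e`
in the graph with edge set `H` and edge weights `w`.  (`⊤` if disconnected.) -/
noncomputable def edist (H : Finset (Sym2 V)) (w : Sym2 V → ℝ) (e : Sym2 V) : ℝ≥0∞ :=
  sInf {x | ∃ (u v : V) (p : (toSG H).Walk u v), e = s(u, v) ∧ walkWeight w p = x}

/-- Total weight of an edge set. -/
noncomputable def gweight (w : Sym2 V → ℝ) (H : Finset (Sym2 V)) : ℝ := ∑ e ∈ H, w e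

/-- `H` is a `t`-spanner of the graph with edge set `E` and weights `w`. -/
def IsSpanner (w : Sym2 V → ℝ) (t : ℝ) (E H : Finset (Sym2 V)) : Prop :=
  H ⊆ E ∧ ∀ u v : V, edist H w s(u, v) ≤ ENNReal.ofReal t * edist E w s(u, v)

open Classical in
/-- One pass of the greedy algorithm over a list of candidate edges. -/
noncomputable def greedyList (w : Sym2 V → ℝ) (t : ℝ) :
    List (Sym2 V) → Finset (Sym2 V) → Finset (Sym2 V)
  | [], H => H
  | e :: l, H =>
      greedyList w t l (if ENNReal.ofReal (t * w e) < edist H w e then insert e H else H)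

/-- `H` is an output of the greedy `t`-spanner algorithm on the graph with
edge set `E` and weights `w`: the edges of `E` are processed in some
non-decreasing order of weight. -/
def IsGreedy (w : Sym2 V → ℝ) (t : ℝ) (E H : Finset (Sym2 V)) : Prop :=
  ∃ l : List (Sym2 V), l.Nodup ∧ (∀ e, e ∈ l ↔ e ∈ E) ∧
    l.Pairwise (fun a b => w a ≤ w b) ∧ greedyList w t l ∅ = H

/-- `T` is a minimum spanning tree of the graph with edge set `E` and weights `w`. -/
def IsMST (w : Sym2 V → ℝ) (E T : Finset (Sym2 V)) : Prop :=
  T ⊆ E ∧ (toSG T).IsTree ∧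
    ∀ T' ⊆ E, (toSG T').IsTree → gweight w T ≤ gweight w T'

/-- The edge set of the complete graph on `V`. -/
def completeE (V : Type*) [Fintype V] [DecidableEq V] : Finset (Sym2 V) :=
  Finset.univ.filter fun e => ¬ e.IsDiag

/-- Metric distance as a weight function on unordered pairs. -/
noncomputable def mw (V : Type*) [MetricSpace V] : Sym2 V → ℝ :=
  Sym2.lift ⟨dist, fun a b => dist_comm a b⟩

/-- The weight function of the metric space induced by the graph with
edge set `H` and weights `w` (shortest-path distances of pairs). -/
noncomputable def indw (H : Finset (Sym2 V)) (w : Sym2 V → ℝ) : Sym2 V → ℝ :=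
  fun e => (edist H w e).toReal

/-- `d` satisfies the doubling property with doubling dimension (at most) `k`:
every ball of radius `r` can be covered by at most `2 ^ k` balls of radius `r / 2`. -/
def HasDoublingDim {M : Type*} (d : M → M → ℝ) (k : ℕ) : Prop :=
  ∀ (x : M) (r : ℝ), ∃ s : Finset M, s.card ≤ 2 ^ k ∧
    ∀ y, d x y ≤ r → ∃ c ∈ s, d c y ≤ r / 2

/-!
Three facts about the greedy spanner `H` combine.
(ii) `H` is stretch-minimal: every edge `e` of `H` has its endpoints more than `t · w e` apart in
`H - e`. This holds when `e` is accepted and survives later, no lighter, insertions. Hence no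
proper subgraph of `H` is a `t`-spanner of `H`.
(i) Replacing each edge of a `t`-spanner `S` of `M_H` by a shortest path of `H` gives a `t`-spanner
of `H` inside `H` of weight at most `w_{M_H}(S)`; by (ii) it is `H` itself.
(iii) The endpoints of every rejected edge are joined in `H` by edges that are no heavier, so
exchanging edges turns an MST of `G` into a spanning tree of `H` of no greater weight; on the
edges of `H`, `δ_H ≤ w`, so `w(MST(M_H)) ≤ w(MST(G))`.
-/

namespace SimpleGraph

variable {V : Type*} {G G' : SimpleGraph V} {u v a b : V}

lemma Connected.connected_of_forall_adj_reachable (hG : G.Connected)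
    (h : ∀ a b, G.Adj a b → G'.Reachable a b) : G'.Connected := by
  have := hG.nonempty
  refine ⟨fun x y => ?_⟩
  exact Relation.reflTransGen_le_of_equivalence_of_le G'.reachable_is_equivalence h x y
    ((reachable_iff_reflTransGen x y).1 (hG x y))

lemma Preconnected.reachable_or_reachable_deleteEdges (hG : G.Preconnected) (huv : u ≠ v)
    (x : V) :
    (G.deleteEdges {s(u, v)}).Reachable u x ∨ (G.deleteEdges {s(u, v)}).Reachable v x := by
  classical
  obtain ⟨P, hP⟩ := (hG x u).exists_isPath
  by_cases heP : s(u, v) ∈ P.edges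
  · have hvP := P.snd_mem_support_of_mem_edges heP
    have huP := Walk.endpoint_notMem_support_takeUntil hP hvP huv
    refine .inr (.symm ⟨(P.takeUntil v hvP).toDeleteEdges _ fun e he hev => huP ?_⟩)
    rw [Set.mem_singleton_iff.1 hev] at he
    exact (P.takeUntil v hvP).fst_mem_support_of_mem_edges he
  · exact .inl (.symm ⟨P.toDeleteEdges _ fun e he hev => heP (Set.mem_singleton_iff.1 hev ▸ he)⟩)

/-- Removing a bridge `uv` and adding an edge `ab` across the cut it creates keeps `G` connected. -/
lemma Connected.connected_of_deleteEdges_le (hG : G.Connected) (huv : u ≠ v)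
    (hle : G.deleteEdges {s(u, v)} ≤ G') (hua : (G.deleteEdges {s(u, v)}).Reachable u a)
    (hub : ¬ (G.deleteEdges {s(u, v)}).Reachable u b) (hab : G'.Adj a b) : G'.Connected := by
  have hvb := (hG.preconnected.reachable_or_reachable_deleteEdges huv b).resolve_left hub
  have huv' : G'.Reachable u v := (hua.mono hle).trans (hab.reachable.trans (hvb.mono hle).symm)
  have := hG.nonempty
  refine (connected_iff_exists_forall_reachable _).2 ⟨u, fun x => ?_⟩
  rcases hG.preconnected.reachable_or_reachable_deleteEdges huv x with h | h
  · exact h.mono hle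
  · exact huv'.trans (h.mono hle)

lemma Walk.IsTrail.exists_eq_append_cons {p : G.Walk u v} (hp : p.IsTrail) {e : Sym2 V}
    (he : e ∈ p.edges) :
    ∃ (x y : V) (q₁ : G.Walk u x) (h : G.Adj x y) (q₂ : G.Walk y v),
      e = s(x, y) ∧ p = q₁.append (cons h q₂) ∧ e ∉ q₁.edges ∧ e ∉ q₂.edges := by
  obtain ⟨d, hd, rfl⟩ := List.mem_map.1 he
  obtain ⟨q₁, q₂, rfl⟩ := (p.isSubwalk_toWalk_adj_iff_mem_darts).2 hd
  have hnd := hp.edges_nodup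
  simp only [Walk.edges_append, Adj.toWalk, Walk.edges_cons, Walk.edges_nil] at hnd
  rw [List.nodup_append, List.nodup_append] at hnd
  refine ⟨_, _, q₁, d.adj, q₂, rfl,
    by rw [← Walk.append_assoc, Adj.toWalk, cons_append, nil_append],
    fun h => hnd.1.2.2 _ h _ (List.mem_singleton_self _) rfl,
    fun h => hnd.2.2 _ (List.mem_append_right _ (List.mem_singleton_self _)) _ h rfl⟩

end SimpleGraph

open SimpleGraph Finset

section EdgeSets

variable {V : Type*} {X Y : Finset (Sym2 V)} {u v : V} {e : Sym2 V}

lemma toSG_adj : (toSG X).Adj u v ↔ s(u, v) ∈ X ∧ u ≠ v := fromEdgeSet_adj _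

lemma mem_edgeSet_toSG : e ∈ (toSG X).edgeSet ↔ e ∈ X ∧ ¬ e.IsDiag := by
  simp [toSG]

lemma toSG_mono (h : X ⊆ Y) : toSG X ≤ toSG Y := fromEdgeSet_mono h

lemma mem_of_mem_edges_toSG {p : (toSG X).Walk u v} (h : e ∈ p.edges) : e ∈ X :=
  (mem_edgeSet_toSG.1 (p.edges_subset_edgeSet h)).1

lemma toSG_erase [DecidableEq V] (X : Finset (Sym2 V)) (e : Sym2 V) :
    toSG (X.erase e) = (toSG X).deleteEdges {e} := by
  ext a b
  simp only [toSG, fromEdgeSet_adj, deleteEdges_adj, coe_erase, Set.mem_sdiff, mem_coe,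
    Set.mem_singleton_iff]
  tauto

lemma exists_isTree_subset_of_connected (h : (toSG X).Connected) :
    ∃ T ⊆ X, (toSG T).IsTree := by
  classical
  obtain ⟨T, hTX, hT⟩ := h.exists_isTree_le
  refine ⟨X.filter (· ∈ T.edgeSet), filter_subset _ _, ?_⟩
  convert hT
  ext a b
  simp only [toSG_adj, mem_filter, mem_edgeSet]
  exact ⟨fun h => h.1.2, fun h => ⟨⟨(toSG_adj.1 (hTX h)).1, h⟩, h.ne⟩⟩

end EdgeSets

section WalkWeight

variable {V : Type*} {G G' : SimpleGraph V} {w : Sym2 V → ℝ} {u v x : V}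

@[simp] lemma walkWeight_nil : walkWeight w (Walk.nil : G.Walk u u) = 0 := rfl

@[simp] lemma walkWeight_cons (h : G.Adj u x) (p : G.Walk x v) :
    walkWeight w (.cons h p) = ENNReal.ofReal (w s(u, x)) + walkWeight w p := by
  simp [walkWeight]

@[simp] lemma walkWeight_append (p : G.Walk u x) (q : G.Walk x v) :
    walkWeight w (p.append q) = walkWeight w p + walkWeight w q := by
  simp [walkWeight]

@[simp] lemma walkWeight_reverse (p : G.Walk u v) : walkWeight w p.reverse = walkWeight w p := by
  simp [walkWeight, List.sum_reverse]

@[simp] lemma walkWeight_transfer (p : G.Walk u v) (hp : ∀ e ∈ p.edges, e ∈ G'.edgeSet) :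
    walkWeight w (p.transfer G' hp) = walkWeight w p := by
  simp [walkWeight]

lemma walkWeight_ne_top (p : G.Walk u v) : walkWeight w p ≠ ⊤ := by
  induction p with
  | nil => simp
  | cons _ _ ih => simpa using ih

lemma walkWeight_bypass_le [DecidableEq V] (p : G.Walk u v) :
    walkWeight w p.bypass ≤ walkWeight w p :=
  (p.edges_bypass_sublist_edges.map _).sum_le_sum fun _ _ => zero_le

end WalkWeight

section ShortestPaths

variable {V : Type*} {X Y : Finset (Sym2 V)} {w : Sym2 V → ℝ} {u v : V}

lemma edist_mk_eq_iInf : edist X w s(u, v) = ⨅ p : (toSG X).Walk u v, walkWeight w p := by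
  refine le_antisymm (le_iInf fun p => sInf_le ⟨u, v, p, rfl, rfl⟩) (le_sInf ?_)
  rintro _ ⟨x, y, p, hxy, rfl⟩
  rcases Sym2.eq_iff.1 hxy with ⟨rfl, rfl⟩ | ⟨rfl, rfl⟩
  · exact iInf_le _ p
  · exact (iInf_le _ p.reverse).trans_eq (walkWeight_reverse p)

lemma edist_le_walkWeight (p : (toSG X).Walk u v) : edist X w s(u, v) ≤ walkWeight w p :=
  edist_mk_eq_iInf (X := X) ▸ iInf_le _ p

@[simp] lemma edist_mk_self : edist X w s(u, u) = 0 :=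
  nonpos_iff_eq_zero.1 (edist_le_walkWeight .nil)

lemma edist_mk_triangle (x : V) : edist X w s(u, v) ≤ edist X w s(u, x) + edist X w s(x, v) := by
  simp only [edist_mk_eq_iInf]
  exact ENNReal.le_iInf_add_iInf fun p q =>
    (iInf_le _ (p.append q)).trans_eq (walkWeight_append p q)

lemma edist_le_ofReal_of_mem {e : Sym2 V} (he : e ∈ X) : edist X w e ≤ ENNReal.ofReal (w e) := by
  induction e using Sym2.ind with | _ u v =>
  rcases eq_or_ne u v with rfl | huv
  · simp
  · simpa using edist_le_walkWeight (w := w) (.cons (toSG_adj.2 ⟨he, huv⟩) .nil)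

lemma edist_anti (h : X ⊆ Y) (e : Sym2 V) : edist Y w e ≤ edist X w e := by
  induction e using Sym2.ind with | _ u v =>
  rw [edist_mk_eq_iInf (X := X)]
  exact le_iInf fun p => (edist_le_walkWeight (p.transfer _ fun f hf =>
    edgeSet_mono (toSG_mono h) (p.edges_subset_edgeSet hf))).trans_eq (walkWeight_transfer _ _)

lemma edist_le_walkWeight_of_notMem [DecidableEq V] {a : Sym2 V}
    (p : (toSG (insert a Y)).Walk u v) (ha : a ∉ p.edges) : edist Y w s(u, v) ≤ walkWeight w p := by
  have hp : ∀ f ∈ p.edges, f ∈ (toSG Y).edgeSet := fun f hf => by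
    obtain ⟨hfa, hf'⟩ := mem_edgeSet_toSG.1 (p.edges_subset_edgeSet hf)
    exact mem_edgeSet_toSG.2 ⟨(mem_insert.1 hfa).resolve_left (ne_of_mem_of_not_mem hf ha), hf'⟩
  exact (edist_le_walkWeight (p.transfer _ hp)).trans_eq (walkWeight_transfer _ _)

lemma edist_edges_toFinset_le [DecidableEq V] {G : SimpleGraph V} (p : G.Walk u v) :
    edist p.edges.toFinset w s(u, v) ≤ walkWeight w p := by
  have hp : ∀ f ∈ p.edges, f ∈ (toSG p.edges.toFinset).edgeSet := fun f hf =>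
    mem_edgeSet_toSG.2
      ⟨List.mem_toFinset.2 hf, G.not_isDiag_of_mem_edgeSet (p.edges_subset_edgeSet hf)⟩
  exact (edist_le_walkWeight (p.transfer _ hp)).trans_eq (walkWeight_transfer _ _)

lemma edist_le_edist_of_forall_mem {S : Finset (Sym2 V)} {w' : Sym2 V → ℝ}
    (h : ∀ e ∈ S, edist Y w e ≤ ENNReal.ofReal (w' e)) :
    edist Y w s(u, v) ≤ edist S w' s(u, v) := by
  rw [edist_mk_eq_iInf (X := S)]
  refine le_iInf fun p => ?_
  induction p with
  | nil => simp
  | cons hadj q ih =>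
    rw [walkWeight_cons]
    exact (edist_mk_triangle _).trans (add_le_add (h _ (toSG_adj.1 hadj).1) ih)

lemma edist_lt_top_iff : edist X w s(u, v) < ⊤ ↔ (toSG X).Reachable u v := by
  refine ⟨fun h => ?_, fun ⟨p⟩ => (edist_le_walkWeight p).trans_lt (walkWeight_ne_top p).lt_top⟩
  by_contra hr
  have : IsEmpty ((toSG X).Walk u v) := not_nonempty_iff.1 hr
  rw [edist_mk_eq_iInf, iInf_of_isEmpty, sInf_empty] at h
  exact lt_irrefl _ h

lemma exists_isPath_walkWeight_eq_edist [Fintype V] [DecidableEq V]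
    (h : (toSG X).Reachable u v) :
    ∃ p : (toSG X).Walk u v, p.IsPath ∧ walkWeight w p = edist X w s(u, v) := by
  classical
  obtain ⟨p₀⟩ := h
  obtain ⟨p, -, hp⟩ := univ.exists_min_image (fun p : (toSG X).Path u v => walkWeight w p.1)
    ⟨p₀.toPath, mem_univ _⟩
  refine ⟨p.1, p.2, le_antisymm ?_ (edist_le_walkWeight _)⟩
  rw [edist_mk_eq_iInf]
  exact le_iInf fun q => (hp q.toPath (mem_univ _)).trans (walkWeight_bypass_le q)

lemma edist_mk_pos [Fintype V] [DecidableEq V] (hw : ∀ e ∈ X, 0 < w e) (huv : u ≠ v) :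
    0 < edist X w s(u, v) := by
  by_cases h : (toSG X).Reachable u v
  · obtain ⟨p, -, hp⟩ := exists_isPath_walkWeight_eq_edist (w := w) h
    rw [← hp]
    cases p with
    | nil => exact absurd rfl huv
    | cons hadj q =>
      rw [walkWeight_cons]
      exact add_pos_of_pos_of_nonneg (ENNReal.ofReal_pos.2 (hw _ (toSG_adj.1 hadj).1)) zero_le
  · rw [← edist_lt_top_iff, not_lt, top_le_iff] at h
    exact h ▸ ENNReal.zero_lt_top

end ShortestPaths

section Weights

variable {V : Type*} {X H : Finset (Sym2 V)} {w : Sym2 V → ℝ} {u v : V}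

lemma gweight_biUnion_le [DecidableEq V] {ι : Type*} {s : Finset ι} {F : ι → Finset (Sym2 V)}
    (hw : ∀ i ∈ s, ∀ e ∈ F i, 0 ≤ w e) : gweight w (s.biUnion F) ≤ ∑ i ∈ s, gweight w (F i) := by
  classical
  induction s using Finset.induction_on with
  | empty => simp [gweight]
  | insert i s hi ih =>
    rw [biUnion_insert, sum_insert hi, gweight,
      ← add_le_add_iff_right (∑ e ∈ F i ∩ s.biUnion F, w e), sum_union_inter]
    have hinter : 0 ≤ ∑ e ∈ F i ∩ s.biUnion F, w e :=
      sum_nonneg fun e he => hw i (mem_insert_self _ _) e (mem_inter.1 he).1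
    have := ih fun j hj => hw j (mem_insert_of_mem hj)
    unfold gweight at this ⊢
    linarith

lemma gweight_edges_toFinset [DecidableEq V] {G : SimpleGraph V} {p : G.Walk u v} (hp : p.IsPath)
    (hw : ∀ e ∈ p.edges, 0 ≤ w e) : gweight w p.edges.toFinset = (walkWeight w p).toReal := by
  have hnd := hp.isTrail.edges_nodup
  rw [walkWeight, ← List.sum_toFinset _ hnd, ENNReal.toReal_sum fun _ _ => ENNReal.ofReal_ne_top]
  exact sum_congr rfl fun e he => (ENNReal.toReal_ofReal (hw e (List.mem_toFinset.1 he))).symm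

lemma gweight_pos_of_connected [Nontrivial V] (hX : (toSG X).Connected)
    (hw : ∀ e ∈ X, 0 ≤ w e) (hpos : ∀ u v, u ≠ v → 0 < w s(u, v)) : 0 < gweight w X := by
  obtain ⟨v, huv⟩ := hX.preconnected.exists_adj_of_nontrivial (Classical.arbitrary V)
  exact sum_pos' hw ⟨_, (toSG_adj.1 huv).1, hpos _ _ huv.ne⟩

lemma indw_le_of_mem {e : Sym2 V} (he : e ∈ H) (hw : 0 ≤ w e) : indw H w e ≤ w e :=
  ENNReal.toReal_le_of_le_ofReal hw (edist_le_ofReal_of_mem he)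

lemma indw_pos [Fintype V] [DecidableEq V] (hH : (toSG H).Connected) (hw : ∀ e ∈ H, 0 < w e)
    (huv : u ≠ v) : 0 < indw H w s(u, v) :=
  ENNReal.toReal_pos (edist_mk_pos hw huv).ne' (edist_lt_top_iff.2 (hH.preconnected u v)).ne

lemma completeE_eq_empty [Fintype V] [DecidableEq V] [Subsingleton V] : completeE V = ∅ :=
  filter_false_of_mem fun e _ => not_not.2 <| by
    induction e using Sym2.ind with | _ u v => exact Sym2.mk_isDiag_iff.2 (Subsingleton.elim u v)

lemma exists_isMST {X T : Finset (Sym2 V)} (w : Sym2 V → ℝ) (hT : T ⊆ X)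
    (hTtree : (toSG T).IsTree) : ∃ M, IsMST w X M := by
  classical
  obtain ⟨M, hM, hmin⟩ := (X.powerset.filter fun T => (toSG T).IsTree).exists_min_image (gweight w)
    ⟨T, mem_filter.2 ⟨mem_powerset.2 hT, hTtree⟩⟩
  obtain ⟨hMX, hMtree⟩ := mem_filter.1 hM
  exact ⟨M, mem_powerset.1 hMX, hMtree, fun T' hT' hT'tree =>
    hmin T' (mem_filter.2 ⟨mem_powerset.2 hT', hT'tree⟩)⟩

end Weights

section StretchMinimal

variable {V : Type*} [DecidableEq V] {H H' : Finset (Sym2 V)} {w : Sym2 V → ℝ} {t : ℝ}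
  {a : Sym2 V}

def IsStretchMinimal (w : Sym2 V → ℝ) (t : ℝ) (H : Finset (Sym2 V)) : Prop :=
  ∀ e ∈ H, ENNReal.ofReal (t * w e) < edist (H.erase e) w e

lemma ENNReal.add_ofReal_le_ofReal_mul {A : ℝ≥0∞} {x y : ℝ} (ht : 0 ≤ t) (hxy : x ≤ y)
    (h : A + ENNReal.ofReal y ≤ ENNReal.ofReal (t * x)) :
    A + ENNReal.ofReal x ≤ ENNReal.ofReal (t * y) := by
  rw [ENNReal.ofReal_mul ht] at h ⊢
  have hx := ENNReal.ofReal_le_ofReal hxy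
  refine (ENNReal.add_le_add_iff_right (ENNReal.ofReal_ne_top (r := y))).1 ?_
  calc A + ENNReal.ofReal x + ENNReal.ofReal y = A + ENNReal.ofReal y + ENNReal.ofReal x := by ring
    _ ≤ ENNReal.ofReal t * ENNReal.ofReal x + ENNReal.ofReal x := by gcongr
    _ ≤ ENNReal.ofReal t * ENNReal.ofReal y + ENNReal.ofReal y := by gcongr

/-- A short detour through `a` between the endpoints of some `e ∈ H` could be rerouted through `e`
between the endpoints of `a`, which are more than `t · w a` apart in `H`. -/
lemma IsStretchMinimal.insert [Fintype V] (ht : 0 ≤ t) (hH : IsStretchMinimal w t H)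
    (hle : ∀ f ∈ H, w f ≤ w a) (ha : ENNReal.ofReal (t * w a) < edist H w a) :
    IsStretchMinimal w t (insert a H) := by
  by_cases haH : a ∈ H
  · rwa [insert_eq_of_mem haH]
  intro e he
  rcases mem_insert.1 he with rfl | heH
  · rwa [erase_insert haH]
  rw [erase_insert_of_ne (ne_of_mem_of_not_mem heH haH).symm]
  induction e using Sym2.ind with | _ u v =>
  by_contra! hc
  obtain ⟨p, hp, hpw⟩ := exists_isPath_walkWeight_eq_edist (w := w)
    (edist_lt_top_iff.1 (hc.trans_lt ENNReal.ofReal_lt_top))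
  rw [← hpw] at hc
  by_cases hap : a ∉ p.edges
  · exact (hH _ heH).not_ge ((edist_le_walkWeight_of_notMem p hap).trans hc)
  obtain ⟨x, y, q₁, hxy, q₂, rfl, rfl, h₁, h₂⟩ := hp.isTrail.exists_eq_append_cons (not_not.1 hap)
  have hdetour :
      edist H w s(x, y) ≤ walkWeight w q₁ + walkWeight w q₂ + ENNReal.ofReal (w s(u, v)) :=
    calc edist H w s(x, y)
        ≤ edist H w s(x, u) + (edist H w s(u, v) + edist H w s(v, y)) :=
          (edist_mk_triangle u).trans (by gcongr; exact edist_mk_triangle v)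
      _ ≤ walkWeight w q₁ + (ENNReal.ofReal (w s(u, v)) + walkWeight w q₂) := by
          rw [Sym2.eq_swap (a := x), Sym2.eq_swap (a := v)]
          gcongr
          · exact (edist_anti (erase_subset _ _) _).trans (edist_le_walkWeight_of_notMem q₁ h₁)
          · exact edist_le_ofReal_of_mem heH
          · exact (edist_anti (erase_subset _ _) _).trans (edist_le_walkWeight_of_notMem q₂ h₂)
      _ = _ := by ring
  refine ha.not_ge (hdetour.trans (ENNReal.add_ofReal_le_ofReal_mul ht (hle _ heH) ?_))
  simpa [add_right_comm, add_assoc] using hc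

lemma IsStretchMinimal.eq_of_isSpanner (ht : 0 ≤ t) (hH : IsStretchMinimal w t H)
    (hH' : IsSpanner w t H H') : H' = H := by
  refine hH'.1.antisymm fun e he => ?_
  by_contra he'
  induction e using Sym2.ind with | _ u v =>
  refine (hH _ he).not_ge ?_
  calc edist (H.erase s(u, v)) w s(u, v) ≤ edist H' w s(u, v) :=
        edist_anti (fun f hf => mem_erase.2 ⟨ne_of_mem_of_not_mem hf he', hH'.1 hf⟩) _
    _ ≤ ENNReal.ofReal t * edist H w s(u, v) := hH'.2 u v
    _ ≤ ENNReal.ofReal t * ENNReal.ofReal (w s(u, v)) := by gcongr; exact edist_le_ofReal_of_mem he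
    _ = ENNReal.ofReal (t * w s(u, v)) := (ENNReal.ofReal_mul ht).symm

end StretchMinimal

section Greedy

variable {V : Type*} [DecidableEq V] {E H Hc : Finset (Sym2 V)} {w : Sym2 V → ℝ} {t : ℝ}
  {l : List (Sym2 V)} {a : Sym2 V}

lemma subset_greedyList : ∀ (l : List (Sym2 V)) (Hc : Finset (Sym2 V)), Hc ⊆ greedyList w t l Hc
  | [], _ => subset_rfl
  | a :: l, Hc => by
    rw [greedyList]
    refine subset_trans ?_ (subset_greedyList l _)
    split_ifs
    exacts [subset_insert _ _, subset_rfl]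

lemma greedyList_subset : ∀ (l : List (Sym2 V)) (Hc : Finset (Sym2 V)),
    greedyList w t l Hc ⊆ Hc ∪ l.toFinset
  | [], Hc => by simp [greedyList]
  | a :: l, Hc => by
    rw [greedyList, List.toFinset_cons]
    refine (greedyList_subset l _).trans (union_subset ?_ (by grind))
    split_ifs
    exacts [by grind, subset_union_left]

lemma forall_mem_insert_le (hl : (a :: l).Pairwise (w · ≤ w ·))
    (hle : ∀ f ∈ Hc, ∀ b ∈ a :: l, w f ≤ w b) : ∀ f ∈ insert a Hc, ∀ b ∈ l, w f ≤ w b := by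
  intro f hf b hb
  rcases mem_insert.1 hf with rfl | hf
  exacts [List.rel_of_pairwise_cons hl hb, hle f hf b (List.mem_cons_of_mem _ hb)]

lemma IsStretchMinimal.greedyList [Fintype V] (ht : 0 ≤ t) :
    ∀ {l : List (Sym2 V)} {Hc : Finset (Sym2 V)}, l.Pairwise (w · ≤ w ·) →
      (∀ f ∈ Hc, ∀ b ∈ l, w f ≤ w b) → IsStretchMinimal w t Hc →
      IsStretchMinimal w t (greedyList w t l Hc)
  | [], _, _, _, hHc => hHc
  | a :: l, Hc, hl, hle, hHc => by
    rw [_root_.greedyList]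
    refine IsStretchMinimal.greedyList ht (List.pairwise_cons.1 hl).2 (fun f hf b hb => ?_) ?_
    · refine forall_mem_insert_le hl hle f ?_ b hb
      split_ifs at hf
      exacts [hf, mem_insert_of_mem hf]
    · split_ifs with ha
      exacts [hHc.insert ht (fun f hf => hle f hf a List.mem_cons_self) ha, hHc]

lemma edist_filter_greedyList_le :
    ∀ {l : List (Sym2 V)} {Hc : Finset (Sym2 V)}, l.Pairwise (w · ≤ w ·) →
      (∀ f ∈ Hc, ∀ b ∈ l, w f ≤ w b) → ∀ e ∈ l, e ∉ greedyList w t l Hc →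
      edist ((greedyList w t l Hc).filter (w · ≤ w e)) w e ≤ ENNReal.ofReal (t * w e)
  | [], _, _, _, _, he, _ => absurd he List.not_mem_nil
  | a :: l, Hc, hl, hle, e, he, hrej => by
    rw [greedyList] at hrej ⊢
    rcases List.mem_cons.1 he with rfl | he
    · split_ifs at hrej ⊢ with hc
      · exact absurd (subset_greedyList _ _ (mem_insert_self _ _)) hrej
      · refine (edist_anti (fun f hf => mem_filter.2 ⟨subset_greedyList _ _ hf, ?_⟩) _).trans
          (not_lt.1 hc)
        exact hle f hf _ List.mem_cons_self
    · refine edist_filter_greedyList_le (List.pairwise_cons.1 hl).2 (fun f hf b hb => ?_) e he hrej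
      refine forall_mem_insert_le hl hle f ?_ b hb
      split_ifs at hf
      exacts [hf, mem_insert_of_mem hf]

lemma IsGreedy.subset (hH : IsGreedy w t E H) : H ⊆ E := by
  obtain ⟨l, -, hl, -, rfl⟩ := hH
  exact (greedyList_subset l ∅).trans fun e he => by simpa [hl] using he

lemma IsGreedy.isStretchMinimal [Fintype V] (ht : 0 ≤ t) (hH : IsGreedy w t E H) :
    IsStretchMinimal w t H := by
  obtain ⟨l, -, -, hs, rfl⟩ := hH
  exact IsStretchMinimal.greedyList ht hs (by simp) (by simp [IsStretchMinimal])

lemma IsGreedy.reachable_filter (hH : IsGreedy w t E H) {u v : V} (he : s(u, v) ∈ E)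
    (hrej : s(u, v) ∉ H) : (toSG (H.filter (w · ≤ w s(u, v)))).Reachable u v := by
  obtain ⟨l, -, hl, hs, rfl⟩ := hH
  exact edist_lt_top_iff.1 ((edist_filter_greedyList_le hs (by simp) _ ((hl _).2 he) hrej).trans_lt
    ENNReal.ofReal_lt_top)

lemma IsGreedy.connected (hH : IsGreedy w t E H) (hE : (toSG E).Connected) :
    (toSG H).Connected :=
  hE.connected_of_forall_adj_reachable fun u v huv => by
    by_cases h : s(u, v) ∈ H
    · exact (toSG_adj.2 ⟨h, huv.ne⟩).reachable
    · exact (hH.reachable_filter (toSG_adj.1 huv).1 h).mono (toSG_mono (filter_subset _ _))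

end Greedy

section Pullback

variable {V : Type*} [Fintype V] [DecidableEq V] {H : Finset (Sym2 V)} {w : Sym2 V → ℝ} {t : ℝ}

lemma exists_subset_edist_le_gweight_le (hH : (toSG H).Connected) (hw : ∀ e ∈ H, 0 ≤ w e)
    (S : Finset (Sym2 V)) :
    ∃ H' ⊆ H, (∀ u v, edist H' w s(u, v) ≤ edist S (indw H w) s(u, v)) ∧
      gweight w H' ≤ gweight (indw H w) S := by
  have hpath : ∀ e : Sym2 V, ∃ F ⊆ H,
      gweight w F ≤ indw H w e ∧ edist F w e ≤ ENNReal.ofReal (indw H w e) := by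
    intro e
    induction e using Sym2.ind with | _ u v =>
    obtain ⟨p, hp, hpw⟩ := exists_isPath_walkWeight_eq_edist (w := w) (hH.preconnected u v)
    have hfin := (edist_lt_top_iff (w := w) |>.2 (hH.preconnected u v)).ne
    refine ⟨p.edges.toFinset, fun f hf => mem_of_mem_edges_toSG (List.mem_toFinset.1 hf), ?_, ?_⟩
    · rw [gweight_edges_toFinset hp fun f hf => hw f (mem_of_mem_edges_toSG hf), hpw]
      rfl
    · rw [indw, ENNReal.ofReal_toReal hfin, ← hpw]
      exact edist_edges_toFinset_le p
  choose F hFH hFw hFd using hpath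
  refine ⟨S.biUnion F, biUnion_subset.2 fun e _ => hFH e, fun u v => ?_, ?_⟩
  · exact edist_le_edist_of_forall_mem fun e he =>
      (edist_anti (subset_biUnion_of_mem F he) e).trans (hFd e)
  · calc gweight w (S.biUnion F) ≤ ∑ e ∈ S, gweight w (F e) :=
          gweight_biUnion_le fun e _ f hf => hw f (hFH e hf)
      _ ≤ gweight (indw H w) S := sum_le_sum fun e _ => hFw e

lemma IsStretchMinimal.gweight_le_of_spanner (ht : 0 ≤ t) (hmin : IsStretchMinimal w t H)
    (hH : (toSG H).Connected) (hw : ∀ e ∈ H, 0 ≤ w e) {S : Finset (Sym2 V)}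
    (hS : ∀ u v, edist S (indw H w) s(u, v) ≤ ENNReal.ofReal t * edist H w s(u, v)) :
    gweight w H ≤ gweight (indw H w) S := by
  obtain ⟨H', hH'H, hd, hgw⟩ := exists_subset_edist_le_gweight_le hH hw S
  obtain rfl := hmin.eq_of_isSpanner ht ⟨hH'H, fun u v => (hd u v).trans (hS u v)⟩
  exact hgw

end Pullback

section Exchange

variable {V : Type*} [DecidableEq V] {E K Z : Finset (Sym2 V)} {w : Sym2 V → ℝ} {u v : V}

/-- Drop `uv` if it is not a bridge of `Z`; otherwise trade it for an edge of the `K`-walk from `u`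
to `v` that crosses the cut. -/
lemma exists_exchange (hZ : (toSG Z).Connected) (he : s(u, v) ∈ Z) (hw : 0 ≤ w s(u, v))
    (hK : (toSG (K.filter (w · ≤ w s(u, v)))).Reachable u v) :
    ∃ Z', (toSG Z').Connected ∧ gweight w Z' ≤ gweight w Z ∧ Z' \ K ⊆ (Z \ K).erase s(u, v) := by
  have hsum := sum_erase_add Z w he
  by_cases hbr : ((toSG Z).deleteEdges {s(u, v)}).Reachable u v
  · refine ⟨Z.erase s(u, v), ?_, ?_, (erase_sdiff_comm _ _ _).le⟩
    · rw [toSG_erase]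
      exact hZ.connected_delete_edge_of_not_isBridge (not_not.2 hbr)
    · unfold gweight
      linarith
  obtain ⟨W⟩ := hK
  obtain ⟨d, -, hda, hdb⟩ :=
    W.exists_boundary_dart {x | ((toSG Z).deleteEdges {s(u, v)}).Reachable u x} (.refl _) hbr
  obtain ⟨hdK, hdw⟩ := mem_filter.1 (toSG_adj.1 d.adj).1
  have hdZ : s(d.fst, d.snd) ∉ Z.erase s(u, v) := fun h =>
    hdb (hda.trans (by rw [← toSG_erase]; exact (toSG_adj.2 ⟨h, d.adj.ne⟩).reachable))
  refine ⟨insert s(d.fst, d.snd) (Z.erase s(u, v)), ?_, ?_, ?_⟩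
  · refine hZ.connected_of_deleteEdges_le (by rintro rfl; exact hbr (Reachable.refl _)) ?_ hda hdb
      (toSG_adj.2 ⟨mem_insert_self _ _, d.adj.ne⟩)
    rw [← toSG_erase]
    exact toSG_mono (subset_insert _ _)
  · unfold gweight
    rw [sum_insert hdZ]
    linarith
  · rw [insert_sdiff_of_mem _ hdK, erase_sdiff_comm]

lemma exists_connected_subset_gweight_le (hZ : (toSG Z).Connected) (hw : ∀ e ∈ Z \ K, 0 ≤ w e)
    (hK : ∀ u v, s(u, v) ∈ Z \ K → (toSG (K.filter (w · ≤ w s(u, v)))).Reachable u v) :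
    ∃ K' ⊆ K, (toSG K').Connected ∧ gweight w K' ≤ gweight w Z := by
  induction hn : #(Z \ K) using Nat.strong_induction_on generalizing Z with | _ n ih =>
  obtain hZK | ⟨e, he⟩ := (Z \ K).eq_empty_or_nonempty
  · exact ⟨Z, sdiff_eq_empty_iff_subset.1 hZK, hZ, le_rfl⟩
  induction e using Sym2.ind with | _ u v =>
  obtain ⟨Z', hZ', hZ'w, hsub⟩ := exists_exchange hZ (mem_sdiff.1 he).1 (hw _ he) (hK u v he)
  have hlt : #(Z' \ K) < n := hn ▸ (card_le_card hsub).trans_lt (card_erase_lt_of_mem he)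
  obtain ⟨K', hK'K, hK', hK'w⟩ := ih _ hlt hZ' (fun f hf => hw f (mem_of_mem_erase (hsub hf)))
    (fun x y hxy => hK x y (mem_of_mem_erase (hsub hxy))) rfl
  exact ⟨K', hK'K, hK', hK'w.trans hZ'w⟩

lemma IsGreedy.exists_isMST_indw_le [Fintype V] {H : Finset (Sym2 V)} {t : ℝ}
    (hH : IsGreedy w t E H) (hw : ∀ e ∈ E, 0 < w e) (hE : E ⊆ completeE V) (hZ : IsMST w E Z) :
    ∃ M, IsMST (indw H w) (completeE V) M ∧ gweight (indw H w) M ≤ gweight w Z := by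
  have hHE := hH.subset
  have hZE : ∀ e ∈ Z \ H, e ∈ E := fun e he => hZ.1 (mem_sdiff.1 he).1
  obtain ⟨K, hKH, hK, hKZ⟩ := exists_connected_subset_gweight_le hZ.2.1.connected
    (fun e he => (hw e (hZE e he)).le)
    (fun u v he => hH.reachable_filter (hZE _ he) (mem_sdiff.1 he).2)
  obtain ⟨T, hTK, hT⟩ := exists_isTree_subset_of_connected hK
  have hTE : T ⊆ completeE V := hTK.trans (hKH.trans (hHE.trans hE))
  obtain ⟨M, hM⟩ := exists_isMST (indw H w) hTE hT
  refine ⟨M, hM, ?_⟩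
  calc gweight (indw H w) M ≤ gweight (indw H w) T := hM.2.2 T hTE hT
    _ ≤ gweight w T := sum_le_sum fun e he =>
        indw_le_of_mem (hKH (hTK he)) (hw e (hHE (hKH (hTK he)))).le
    _ ≤ gweight w K := sum_le_sum_of_subset_of_nonneg hTK fun e he _ => (hw e (hHE (hKH he))).le
    _ ≤ gweight w Z := hKZ

end Exchange

/-- Lightness transfer: let `G` be a weighted graph, `H` its
greedy `t`-spanner, and suppose the induced metric `M_H` admits a `t`-spanner
of lightness at most `l`. Then `w(H) ≤ l * w(MST(G))`. -/
theorem lightness_transfer (E H : Finset (Sym2 V)) (w : Sym2 V → ℝ) (t l : ℝ)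
    (ht : 1 ≤ t) (hw : ∀ e ∈ E, 0 < w e) (hE : E ⊆ completeE V)
    (hconn : (toSG E).Connected) (hH : IsGreedy w t E H)
    (hspan : ∃ S : Finset (Sym2 V), S ⊆ completeE V ∧
      (∀ u v : V, edist S (indw H w) s(u, v) ≤
        ENNReal.ofReal t * edist H w s(u, v)) ∧
      ∀ ZM, IsMST (indw H w) (completeE V) ZM →
        gweight (indw H w) S ≤ l * gweight (indw H w) ZM) :
    ∀ Z, IsMST w E Z → gweight w H ≤ l * gweight w Z := by
  intro Z hZ
  obtain ⟨S, -, hS, hSlight⟩ := hspan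
  have ht₀ : 0 ≤ t := zero_le_one.trans ht
  have hHw : ∀ e ∈ H, 0 < w e := fun e he => hw e (hH.subset he)
  have hHconn := hH.connected hconn
  have hHS : gweight w H ≤ gweight (indw H w) S :=
    (hH.isStretchMinimal ht₀).gweight_le_of_spanner ht₀ hHconn (fun e he => (hHw e he).le) hS
  obtain ⟨M, hM, hMZ⟩ := hH.exists_isMST_indw_le hw hE hZ
  rcases subsingleton_or_nontrivial V with hV | hV
  · have hE0 : E = ∅ := subset_empty.1 (completeE_eq_empty (V := V) ▸ hE)
    simp [gweight, subset_empty.1 (hE0 ▸ hH.subset), subset_empty.1 (hE0 ▸ hZ.1)]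
  have hM0 : 0 < gweight (indw H w) M := gweight_pos_of_connected hM.2.1.connected
    (fun _ _ => ENNReal.toReal_nonneg) fun u v huv => indw_pos hHconn hHw huv
  have hl : 0 ≤ l :=
    nonneg_of_mul_nonneg_left
      ((sum_nonneg fun _ _ => ENNReal.toReal_nonneg).trans (hSlight M hM)) hM0
  calc gweight w H ≤ gweight (indw H w) S := hHS
    _ ≤ l * gweight (indw H w) M := hSlight M hM
    _ ≤ l * gweight w Z := mul_le_mul_of_nonneg_left hMZ hl
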